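/- arXiv:2310.06330 — 3 statements merged into one kernel-verified Lean document; each statement's English description precedes it below -/
import Mathlib

section
/- Let H be a complex Hilbert space, let T : H → H be a bounded self-adjoint linear operator, and let f ∈ H. Then there exists a finite positive Borel measure μ on ℝ whose topological support is contained in the interval [−‖T‖, ‖T‖], such that μ(ℝ) = ‖f‖² and ⟨T^k f, f⟩ = ∫ λ^k μ(dλ) for every natural number k. -/
open MeasureTheory

/-- The topological support of a Borel measure on ℝ: the set of points every open
neighborhood of which has positive measure. -/
def msupport (μ : Measure ℝ) : Set ℝ :=
  {x | ∀ U : Set ℝ, IsOpen U → x ∈ U → 0 < μ U}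

noncomputable section StmtAux

open Set Filter Topology

/-- A continuous "step" function: equal to `1` on `(-∞, c]`, `0` on `[c+δ, ∞)`. -/
def stp (c δ : ℝ) : ℝ → ℝ := fun t => max 0 (min 1 ((c + δ - t) / δ))

lemma stp_cont (c δ : ℝ) : Continuous (stp c δ) := by
  unfold stp; fun_prop

lemma stp_nonneg (c δ t : ℝ) : 0 ≤ stp c δ t := le_max_left _ _

lemma stp_le_one (c δ t : ℝ) : stp c δ t ≤ 1 := max_le zero_le_one (min_le_left _ _)

lemma stp_eq_one {c δ t : ℝ} (hδ : 0 < δ) (h : t ≤ c) : stp c δ t = 1 := by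
  have h1 : (1:ℝ) ≤ (c + δ - t) / δ := (one_le_div hδ).2 (by linarith)
  unfold stp
  rw [min_eq_left h1, max_eq_right zero_le_one]

lemma stp_eq_zero {c δ t : ℝ} (hδ : 0 < δ) (h : c + δ ≤ t) : stp c δ t = 0 := by
  have h1 : (c + δ - t) / δ ≤ 0 := div_nonpos_of_nonpos_of_nonneg (by linarith) hδ.le
  unfold stp
  rw [max_eq_left ((min_le_right _ _).trans h1)]

lemma stp_mono_c {c c' : ℝ} (δ t : ℝ) (hδ : 0 < δ) (h : c ≤ c') :
    stp c δ t ≤ stp c' δ t := by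
  unfold stp
  have : (c + δ - t) / δ ≤ (c' + δ - t) / δ := by
    have hnum : c + δ - t ≤ c' + δ - t := by linarith
    gcongr

  exact max_le_max le_rfl (min_le_min le_rfl this)

lemma stp_le_stp {c δ c' δ' : ℝ} (t : ℝ) (hδ : 0 < δ) (hδ' : 0 < δ') (h : c + δ ≤ c') :
    stp c δ t ≤ stp c' δ' t := by
  rcases le_or_gt t c' with h1 | h1
  · rw [stp_eq_one hδ' h1]; exact stp_le_one _ _ _
  · rw [stp_eq_zero hδ (by linarith)]; exact stp_nonneg _ _ _

/-- Abel summation identity. -/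
lemma abel_sum (c A : ℕ → ℝ) (n : ℕ) :
    ∑ i ∈ Finset.range n, c i * (A (i+1) - A i) =
      (∑ i ∈ Finset.range n, (c i - c (i+1)) * A (i+1)) + c n * A n - c 0 * A 0 := by
  induction n with
  | zero => simp
  | succ k ih => rw [Finset.sum_range_succ, ih, Finset.sum_range_succ]; ring

/-- A positive linear functional on continuous functions, where positivity is only
required relative to the compact set `[-a, a]`. -/
structure GoodFunctional (a : ℝ) (Λ : (ℝ → ℝ) → ℝ) : Prop where
  ha : 0 ≤ a
  add : ∀ g h : ℝ → ℝ, Continuous g → Continuous h →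
    Λ (fun x => g x + h x) = Λ g + Λ h
  smul : ∀ (c : ℝ) (g : ℝ → ℝ), Continuous g → Λ (fun x => c * g x) = c * Λ g
  mono : ∀ g h : ℝ → ℝ, Continuous g → Continuous h →
    (∀ x ∈ Set.Icc (-a) a, g x ≤ h x) → Λ g ≤ Λ h

namespace GoodFunctional

variable {a : ℝ} {Λ : (ℝ → ℝ) → ℝ} (hΛ : GoodFunctional a Λ)

include hΛ

lemma zero : Λ (fun _ => 0) = 0 := by
  have h := hΛ.smul 0 (fun _ => 0) continuous_const
  have h2 : (fun x : ℝ => 0 * (0:ℝ)) = (fun _ : ℝ => (0:ℝ)) := by funext x; ring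
  rw [h2] at h
  linarith

lemma nonneg (g : ℝ → ℝ) (hg : Continuous g) (h : ∀ x ∈ Set.Icc (-a) a, 0 ≤ g x) :
    0 ≤ Λ g := by
  have := hΛ.mono (fun _ => 0) g continuous_const hg h
  rwa [hΛ.zero] at this

lemma congr_Icc (g h : ℝ → ℝ) (hg : Continuous g) (hh : Continuous h)
    (he : ∀ x ∈ Set.Icc (-a) a, g x = h x) : Λ g = Λ h :=
  le_antisymm (hΛ.mono g h hg hh fun x hx => (he x hx).le)
    (hΛ.mono h g hh hg fun x hx => (he x hx).ge)

lemma sub (g h : ℝ → ℝ) (hg : Continuous g) (hh : Continuous h) :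
    Λ (fun x => g x - h x) = Λ g - Λ h := by
  have h1 : (fun x => g x - h x) = (fun x => g x + (-1) * h x) := by funext x; ring
  rw [h1, hΛ.add g (fun x => (-1) * h x) hg (by fun_prop), hΛ.smul (-1) h hh]
  ring

lemma sum (n : ℕ) (G : ℕ → ℝ → ℝ) (hG : ∀ i, Continuous (G i)) :
    Λ (fun x => ∑ i ∈ Finset.range n, G i x) = ∑ i ∈ Finset.range n, Λ (G i) := by
  induction n with
  | zero => simpa using hΛ.zero
  | succ k ih =>
    have h1 : (fun x => ∑ i ∈ Finset.range (k+1), G i x)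
        = (fun x => (∑ i ∈ Finset.range k, G i x) + G k x) := by
      funext x; rw [Finset.sum_range_succ]
    rw [h1, hΛ.add _ (G k) (by fun_prop) (hG k), ih, Finset.sum_range_succ]

end GoodFunctional

/-- The set of values of `Λ` on admissible step functions. -/
def Sset (Λ : (ℝ → ℝ) → ℝ) (x : ℝ) : Set ℝ :=
  (fun p : ℝ × ℝ => Λ (stp p.1 p.2)) '' {p | x < p.1 ∧ 0 < p.2}

/-- The candidate cumulative distribution function. -/
def Ffun (Λ : (ℝ → ℝ) → ℝ) (x : ℝ) : ℝ := sInf (Sset Λ x)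

section Ffacts

variable {a : ℝ} {Λ : (ℝ → ℝ) → ℝ} (hΛ : GoodFunctional a Λ)

lemma Sset_nonempty (x : ℝ) : (Sset Λ x).Nonempty :=
  ⟨Λ (stp (x+1) 1), ⟨(x+1, 1), ⟨lt_add_one x, one_pos⟩, rfl⟩⟩

include hΛ

lemma Sset_nonneg : ∀ r ∈ Sset Λ x, 0 ≤ r := by
  rintro r ⟨⟨c, δ⟩, ⟨hc, hδ⟩, rfl⟩
  exact hΛ.nonneg _ (stp_cont _ _) fun y _ => stp_nonneg _ _ _

lemma Sset_bddBelow (x : ℝ) : BddBelow (Sset Λ x) :=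
  ⟨0, fun r hr => Sset_nonneg hΛ r hr⟩

lemma Ffun_nonneg (x : ℝ) : 0 ≤ Ffun Λ x :=
  le_csInf (Sset_nonempty x) (Sset_nonneg hΛ)

lemma Ffun_mono : Monotone (Ffun Λ) := by
  intro x y hxy
  apply csInf_le_csInf (Sset_bddBelow hΛ x) (Sset_nonempty y)
  rintro r ⟨⟨c, δ⟩, ⟨hc, hδ⟩, rfl⟩
  exact ⟨(c, δ), ⟨lt_of_le_of_lt hxy hc, hδ⟩, rfl⟩

lemma Ffun_le {x c δ : ℝ} (h : x < c) (hδ : 0 < δ) : Ffun Λ x ≤ Λ (stp c δ) := by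
  set c' := (x + c) / 2 with hc'
  have h1 : x < c' := by rw [hc']; linarith
  have h2 : 0 < c - c' := by rw [hc']; linarith
  have hmem : Λ (stp c' (c - c')) ∈ Sset Λ x := ⟨(c', c - c'), ⟨h1, h2⟩, rfl⟩
  refine (csInf_le (Sset_bddBelow hΛ x) hmem).trans ?_
  exact hΛ.mono _ _ (stp_cont _ _) (stp_cont _ _)
    fun t _ => stp_le_stp t h2 hδ (by linarith)

lemma le_Ffun {x c δ : ℝ} (h : c + δ ≤ x) (hδ : 0 < δ) : Λ (stp c δ) ≤ Ffun Λ x := by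
  apply le_csInf (Sset_nonempty x)
  rintro r ⟨⟨c', δ'⟩, ⟨hc', hδ'⟩, rfl⟩
  exact hΛ.mono _ _ (stp_cont _ _) (stp_cont _ _)
    fun t _ => stp_le_stp t hδ hδ' (h.trans hc'.le)

lemma Ffun_eq_zero {x : ℝ} (h : x < -a) : Ffun Λ x = 0 := by
  refine le_antisymm ?_ (Ffun_nonneg hΛ x)
  set c := (x + -a) / 2 with hc
  have h1 : x < c := by rw [hc]; linarith
  have h2 : c < -a := by rw [hc]; linarith
  have h3 : 0 < -a - c := by linarith
  refine (Ffun_le hΛ h1 h3).trans ?_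
  have := hΛ.mono (stp c (-a - c)) (fun _ => 0) (stp_cont _ _) continuous_const
    (fun t ht => by rw [stp_eq_zero h3 (by rcases ht with ⟨ht1, _⟩; linarith)])
  rwa [hΛ.zero] at this

lemma Ffun_eq_L {x : ℝ} (h : a ≤ x) : Ffun Λ x = Λ (fun _ => 1) := by
  refine le_antisymm ?_ ?_
  · refine (Ffun_le hΛ (lt_add_one x) one_pos).trans_eq ?_
    exact hΛ.congr_Icc _ _ (stp_cont _ _) continuous_const
      fun t ht => stp_eq_one one_pos (by rcases ht with ⟨_, ht2⟩; linarith)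
  · apply le_csInf (Sset_nonempty x)
    rintro r ⟨⟨c, δ⟩, ⟨hc, hδ⟩, rfl⟩
    refine le_of_eq (hΛ.congr_Icc _ _ continuous_const (stp_cont _ _) ?_)
    intro t ht
    rw [stp_eq_one hδ (by rcases ht with ⟨_, ht2⟩; linarith)]

lemma Ffun_rightCont (x : ℝ) : ContinuousWithinAt (Ffun Λ) (Set.Ici x) x := by
  refine tendsto_order.2 ⟨fun u hu => ?_, fun u hu => ?_⟩
  · filter_upwards [self_mem_nhdsWithin] with y hy
    exact lt_of_lt_of_le hu (Ffun_mono hΛ hy)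
  · obtain ⟨r, hrmem, hru⟩ := exists_lt_of_csInf_lt (Sset_nonempty x) hu
    obtain ⟨⟨c, δ⟩, ⟨hc, hδ⟩, rfl⟩ := hrmem
    filter_upwards [Ico_mem_nhdsGE hc] with y hy
    exact lt_of_le_of_lt (Ffun_le hΛ hy.2 hδ) hru

end Ffacts

section FSfacts

variable {a : ℝ} {Λ : (ℝ → ℝ) → ℝ}

/-- The Stieltjes function associated to the functional. -/
def FS (hΛ : GoodFunctional a Λ) : StieltjesFunction ℝ where
  toFun := Ffun Λ
  mono' := Ffun_mono hΛ
  right_continuous' := Ffun_rightCont hΛ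

variable (hΛ : GoodFunctional a Λ)

lemma FS_tendsto_atBot : Tendsto (FS hΛ) atBot (𝓝 0) := by
  apply Tendsto.congr' _ (tendsto_const_nhds (α := ℝ))
  filter_upwards [eventually_lt_atBot (-a)] with x hx
  exact (Ffun_eq_zero hΛ hx).symm

lemma FS_tendsto_atTop : Tendsto (FS hΛ) atTop (𝓝 (Λ (fun _ => 1))) := by
  apply Tendsto.congr' _ (tendsto_const_nhds (α := ℝ))
  filter_upwards [eventually_ge_atTop a] with x hx
  exact (Ffun_eq_L hΛ hx).symm

lemma FS_measure_univ : (FS hΛ).measure Set.univ = ENNReal.ofReal (Λ (fun _ => 1)) := by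
  rw [StieltjesFunction.measure_univ _ (FS_tendsto_atBot hΛ) (FS_tendsto_atTop hΛ), sub_zero]

lemma FS_isFiniteMeasure : IsFiniteMeasure (FS hΛ).measure :=
  ⟨by rw [FS_measure_univ hΛ]; exact ENNReal.ofReal_lt_top⟩

lemma FS_msupport : msupport (FS hΛ).measure ⊆ Set.Icc (-a) a := by
  haveI : IsFiniteMeasure (FS hΛ).measure := FS_isFiniteMeasure hΛ
  intro x hx
  by_contra hmem
  rw [Set.mem_Icc, not_and_or] at hmem
  rcases hmem with hmem | hmem
  · push_neg at hmem
    set m := (x + -a) / 2 with hm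
    have h1 : x < m := by rw [hm]; linarith
    have h2 : m < -a := by rw [hm]; linarith
    have h3 : (FS hΛ).measure (Set.Iio m) = 0 := by
      refine le_antisymm ?_ zero_le
      refine le_trans (measure_mono Set.Iio_subset_Iic_self) ?_
      rw [StieltjesFunction.measure_Iic _ (FS_tendsto_atBot hΛ), sub_zero]
      show ENNReal.ofReal (Ffun Λ m) ≤ 0
      rw [Ffun_eq_zero hΛ h2]
      simp
    have := hx (Set.Iio m) isOpen_Iio h1
    rw [h3] at this
    exact lt_irrefl _ this
  · push_neg at hmem
    set m := (a + x) / 2 with hm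
    have h1 : m < x := by rw [hm]; linarith
    have h2 : a ≤ m := by rw [hm]; linarith
    have h3 : (FS hΛ).measure (Set.Ioi m) = 0 := by
      rw [← Set.compl_Iic, measure_compl measurableSet_Iic (measure_ne_top _ _),
        StieltjesFunction.measure_Iic _ (FS_tendsto_atBot hΛ), sub_zero,
        FS_measure_univ hΛ]
      show ENNReal.ofReal (Λ fun _ => 1) - ENNReal.ofReal (Ffun Λ m) = 0
      rw [Ffun_eq_L hΛ h2, tsub_self]
    have := hx (Set.Ioi m) isOpen_Ioi h1
    rw [h3] at this
    exact lt_irrefl _ this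

end FSfacts

end StmtAux

section KeyIntegral

open Set Filter

variable {a : ℝ} {Λ : (ℝ → ℝ) → ℝ}

set_option maxHeartbeats 1000000 in
theorem FS_integral_eq (hΛ : GoodFunctional a Λ) (g : ℝ → ℝ) (hg : Continuous g) :
    ∫ x, g x ∂(FS hΛ).measure = Λ g := by
  haveI : IsFiniteMeasure (FS hΛ).measure := FS_isFiniteMeasure hΛ
  set μ := (FS hΛ).measure with hμdef
  set L := Λ (fun _ => 1) with hLdef
  have hL0 : 0 ≤ L := hΛ.nonneg _ continuous_const fun x _ => zero_le_one
  set b := a + 1 with hbdef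
  have hab : -b < -a := by rw [hbdef]; linarith
  have hab' : a ≤ b := by rw [hbdef]; linarith
  have hb : 0 < b := by have := hΛ.ha; rw [hbdef]; linarith
  -- the measure is concentrated on `Ioc (-b) b`
  have hIoc : μ (Set.Ioc (-b) b) = ENNReal.ofReal L := by
    rw [hμdef, StieltjesFunction.measure_Ioc]
    show ENNReal.ofReal (Ffun Λ b - Ffun Λ (-b)) = _
    rw [Ffun_eq_L hΛ hab', Ffun_eq_zero hΛ hab, sub_zero]
  have hcompl : μ (Set.Ioc (-b) b)ᶜ = 0 := by
    rw [measure_compl measurableSet_Ioc (measure_ne_top _ _), hIoc, hμdef,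
      FS_measure_univ hΛ, ← hLdef, tsub_self]
  have hres : μ.restrict (Set.Ioc (-b) b) = μ := by
    apply Measure.restrict_eq_self_of_ae_mem
    rw [Filter.Eventually, mem_ae_iff]
    exact hcompl
  have hInt : Integrable g μ := by
    have h1 : IntegrableOn g (Set.Icc (-b) b) μ :=
      hg.continuousOn.integrableOn_compact isCompact_Icc
    have h2 : IntegrableOn g (Set.Ioc (-b) b) μ := h1.mono_set Set.Ioc_subset_Icc_self
    rwa [IntegrableOn, hres] at h2
  -- it suffices to bound the difference by arbitrarily small quantities
  suffices hmain : ∀ ε > 0, |(∫ x, g x ∂μ) - Λ g| ≤ ε * (3 * L + 3) by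
    have habs : |(∫ x, g x ∂μ) - Λ g| ≤ 0 := by
      refine le_of_forall_pos_le_add fun ε hε => ?_
      have hpos : (0:ℝ) < 3 * L + 3 := by linarith
      have := hmain (ε / (3 * L + 3)) (by positivity)
      rw [div_mul_cancel₀ _ (ne_of_gt hpos)] at this
      linarith
    have := abs_nonneg ((∫ x, g x ∂μ) - Λ g)
    have : |(∫ x, g x ∂μ) - Λ g| = 0 := le_antisymm habs this
    have := abs_eq_zero.1 this
    linarith [sub_eq_zero.1 this]
  intro ε hε
  -- uniform continuity of `g` on a big compact interval
  obtain ⟨η, hη, hmod⟩ : ∃ η > 0, ∀ x ∈ Icc (-b-1) (b+1), ∀ y ∈ Icc (-b-1) (b+1),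
      |x - y| < η → |g x - g y| ≤ ε := by
    have huc := (isCompact_Icc (a := -b-1) (b := b+1)).uniformContinuousOn_of_continuous
      hg.continuousOn
    rw [Metric.uniformContinuousOn_iff] at huc
    obtain ⟨η, hη, H⟩ := huc ε hε
    refine ⟨η, hη, fun x hx y hy hxy => ?_⟩
    have := H x hx y hy (by rwa [Real.dist_eq])
    rw [Real.dist_eq] at this
    exact this.le
  -- choose the mesh
  set η' := min η 1 with hη'def
  have hη' : 0 < η' := lt_min hη one_pos
  obtain ⟨n, hn⟩ : ∃ n : ℕ, 4 * b / η' < n := exists_nat_gt _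
  have hn0 : 0 < (n:ℝ) := lt_of_le_of_lt (by positivity) hn
  set h0 := 2 * b / n with hh0def
  have hh0 : 0 < h0 := by positivity
  have hmesh : 2 * h0 ≤ η' := by
    have h4 : 4 * b < n * η' := (div_lt_iff₀ hη').1 hn
    have h5 : 2 * h0 = 4 * b / n := by rw [hh0def]; ring
    rw [h5, div_le_iff₀ hn0]
    linarith
  have hη'le1 : η' ≤ 1 := min_le_right _ _
  have hη'leη : η' ≤ η := min_le_left _ _
  have hh0le : h0 ≤ 1/2 := by linarith
  have hh0η : h0 < η := by linarith
  set δ := h0 / 4 with hδdef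
  have hδ : 0 < δ := by positivity
  have hδleh0 : δ ≤ h0 := by rw [hδdef]; linarith
  have hδle1 : δ ≤ 1 := by linarith
  -- the partition points
  set t : ℕ → ℝ := fun i => -b + i * h0 with htdef
  have ht_succ : ∀ i, t (i+1) = t i + h0 := by
    intro i; simp only [htdef]; push_cast; ring
  have ht_mono : ∀ {i j : ℕ}, i ≤ j → t i ≤ t j := by
    intro i j hij
    simp only [htdef]
    have : (i:ℝ) ≤ j := Nat.cast_le.2 hij
    nlinarith
  have ht0 : t 0 = -b := by simp [htdef]
  have htn : t n = b := by
    have hn' : (n:ℝ) ≠ 0 := ne_of_gt hn0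
    simp only [htdef, hh0def]
    field_simp
    ring
  have htbig : ∀ i ≤ n + 1, t i ∈ Icc (-b-1) (b+1) := by
    intro i hi
    constructor
    · have : t 0 ≤ t i := ht_mono (Nat.zero_le i)
      rw [ht0] at this; linarith
    · have h1 : t i ≤ t (n+1) := ht_mono hi
      rw [ht_succ, htn] at h1
      linarith
  -- boundary values
  set S : ℕ → ℝ := fun i => Λ (stp (t i) δ) with hSdef
  set FF : ℕ → ℝ := fun i => Ffun Λ (t i) with hFFdef
  have hS0 : S 0 = 0 := by
    rw [hSdef]
    show Λ (stp (t 0) δ) = 0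
    have h1 : Λ (stp (t 0) δ) = Λ (fun _ => 0) := by
      apply hΛ.congr_Icc _ _ (stp_cont _ _) continuous_const
      intro x hx
      exact stp_eq_zero hδ (by rw [ht0]; rcases hx with ⟨hx1, _⟩; linarith)
    rw [h1, hΛ.zero]
  have hSn : S n = L := by
    rw [hSdef, hLdef]
    apply hΛ.congr_Icc _ _ (stp_cont _ _) continuous_const
    intro x hx
    exact stp_eq_one hδ (by rw [htn]; rcases hx with ⟨_, hx2⟩; linarith)
  have hFF0 : FF 0 = 0 := by
    rw [hFFdef]; show Ffun Λ (t 0) = 0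
    exact Ffun_eq_zero hΛ (by rw [ht0]; exact hab)
  have hFFn : FF n = L := by
    rw [hFFdef]; show Ffun Λ (t n) = L
    exact Ffun_eq_L hΛ (by rw [htn]; exact hab')
  have hSsand : ∀ i, Ffun Λ (t i - δ) ≤ S i ∧ S i ≤ Ffun Λ (t i + δ) :=
    fun i => ⟨Ffun_le hΛ (by linarith) hδ, le_Ffun hΛ (le_refl _) hδ⟩
  -- the discrete sums
  set D := ∑ i ∈ Finset.range n, g (t (i+1)) * (S (i+1) - S i) with hDdef
  set D' := ∑ i ∈ Finset.range n, g (t (i+1)) * (FF (i+1) - FF i) with hD'def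
  -- Claim A : |Λ g - D| ≤ ε * L
  have claimA : |Λ g - D| ≤ ε * L := by
    set χ : ℕ → ℝ → ℝ := fun i x => stp (t (i+1)) δ x - stp (t i) δ x with hχdef
    have hχcont : ∀ i, Continuous (χ i) := fun i => (stp_cont _ _).sub (stp_cont _ _)
    have hχnonneg : ∀ i x, 0 ≤ χ i x := fun i x =>
      sub_nonneg.2 (stp_mono_c δ x hδ (ht_mono (Nat.le_succ i)))
    -- pointwise estimate on the support of χ i
    have habsχ : ∀ i, i < n → ∀ x ∈ Icc (-a) a, χ i x ≠ 0 → |g x - g (t (i+1))| ≤ ε := by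
      intro i hi x hx hχx
      have hxl : t i < x := by
        by_contra hcon
        push_neg at hcon
        apply hχx
        rw [hχdef]
        show stp (t (i+1)) δ x - stp (t i) δ x = 0
        rw [stp_eq_one hδ hcon, stp_eq_one hδ (hcon.trans (ht_mono (Nat.le_succ i))), sub_self]
      have hxr : x < t (i+1) + δ := by
        by_contra hcon
        push_neg at hcon
        apply hχx
        rw [hχdef]
        show stp (t (i+1)) δ x - stp (t i) δ x = 0
        have h1 : t i + δ ≤ x := by
          have := ht_mono (Nat.le_succ i); linarith
        rw [stp_eq_zero hδ hcon, stp_eq_zero hδ h1, sub_self]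
      have hd : |x - t (i+1)| < η := by
        rw [abs_sub_lt_iff]
        have h1 := ht_succ i
        constructor
        · linarith
        · linarith
      have hxbig : x ∈ Icc (-b-1) (b+1) := by
        rcases hx with ⟨hx1, hx2⟩
        constructor <;> [linarith; linarith]
      exact hmod x hxbig (t (i+1)) (htbig (i+1) (by omega)) hd
    have hΛχ : ∀ i, Λ (χ i) = S (i+1) - S i := fun i =>
      hΛ.sub _ _ (stp_cont _ _) (stp_cont _ _)
    have hdecomp : Λ g = ∑ i ∈ Finset.range n, Λ (fun x => g x * χ i x) := by
      rw [← hΛ.sum n (fun i x => g x * χ i x) (fun i => hg.mul (hχcont i))]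
      apply hΛ.congr_Icc _ _ hg (by fun_prop)
      intro x hx
      have h1 : ∑ i ∈ Finset.range n, g x * χ i x
          = g x * ∑ i ∈ Finset.range n, χ i x := by rw [Finset.mul_sum]
      have h2 : ∑ i ∈ Finset.range n, χ i x = stp (t n) δ x - stp (t 0) δ x :=
        Finset.sum_range_sub (fun i => stp (t i) δ x) n
      have h3 : stp (t n) δ x = 1 :=
        stp_eq_one hδ (by rw [htn]; rcases hx with ⟨_, hx2⟩; linarith)
      have h4 : stp (t 0) δ x = 0 :=
        stp_eq_zero hδ (by rw [ht0]; rcases hx with ⟨hx1, _⟩; linarith)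
      rw [h1, h2, h3, h4]
      ring
    have hup : ∀ i ∈ Finset.range n,
        Λ (fun x => g x * χ i x) ≤ (g (t (i+1)) + ε) * (S (i+1) - S i) := by
      intro i hi
      rw [← hΛχ i, ← hΛ.smul _ _ (hχcont i)]
      apply hΛ.mono _ _ (hg.mul (hχcont i)) (by fun_prop)
      intro x hx
      by_cases hx0 : χ i x = 0
      · simp [hx0]
      · have := habsχ i (Finset.mem_range.1 hi) x hx hx0
        have h1 : g x ≤ g (t (i+1)) + ε := by
          have := abs_le.1 this; linarith [this.1, this.2]
        exact mul_le_mul_of_nonneg_right h1 (hχnonneg i x)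
    have hdown : ∀ i ∈ Finset.range n,
        (g (t (i+1)) - ε) * (S (i+1) - S i) ≤ Λ (fun x => g x * χ i x) := by
      intro i hi
      rw [← hΛχ i, ← hΛ.smul _ _ (hχcont i)]
      apply hΛ.mono _ _ (by fun_prop) (hg.mul (hχcont i))
      intro x hx
      by_cases hx0 : χ i x = 0
      · simp [hx0]
      · have := habsχ i (Finset.mem_range.1 hi) x hx hx0
        have h1 : g (t (i+1)) - ε ≤ g x := by
          have := abs_le.1 this; linarith [this.1, this.2]
        exact mul_le_mul_of_nonneg_right h1 (hχnonneg i x)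
    have hSsum : ∑ i ∈ Finset.range n, (S (i+1) - S i) = L := by
      rw [Finset.sum_range_sub S n, hSn, hS0, sub_zero]
    have hA1 : Λ g ≤ D + ε * L := by
      rw [hdecomp]
      calc ∑ i ∈ Finset.range n, Λ (fun x => g x * χ i x)
          ≤ ∑ i ∈ Finset.range n, (g (t (i+1)) + ε) * (S (i+1) - S i) :=
            Finset.sum_le_sum hup
        _ = D + ε * L := by
            rw [hDdef, ← hSsum, Finset.mul_sum, ← Finset.sum_add_distrib]
            apply Finset.sum_congr rfl
            intro i _
            ring
    have hA2 : D - ε * L ≤ Λ g := by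
      rw [hdecomp]
      calc D - ε * L
          = ∑ i ∈ Finset.range n, (g (t (i+1)) - ε) * (S (i+1) - S i) := by
            rw [hDdef, ← hSsum, Finset.mul_sum, ← Finset.sum_sub_distrib]
            apply Finset.sum_congr rfl
            intro i _
            ring
        _ ≤ ∑ i ∈ Finset.range n, Λ (fun x => g x * χ i x) :=
            Finset.sum_le_sum hdown
    rw [abs_le]
    constructor <;> linarith
  -- Claim B : |∫ g - D'| ≤ ε * L
  have hm : ∀ i, (μ (Set.Ioc (t i) (t (i+1)))).toReal = FF (i+1) - FF i := by
    intro i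
    rw [hμdef, StieltjesFunction.measure_Ioc]
    exact ENNReal.toReal_ofReal (sub_nonneg.2 (Ffun_mono hΛ (ht_mono (Nat.le_succ i))))
  have claimB : |(∫ x, g x ∂μ) - D'| ≤ ε * L := by
    have hsplit : ∀ k : ℕ, ∫ x in Set.Ioc (t 0) (t k), g x ∂μ
        = ∑ i ∈ Finset.range k, ∫ x in Set.Ioc (t i) (t (i+1)), g x ∂μ := by
      intro k
      induction k with
      | zero => simp
      | succ m ih =>
        rw [← Set.Ioc_union_Ioc_eq_Ioc (ht_mono (Nat.zero_le m)) (ht_mono (Nat.le_succ m)),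
          setIntegral_union (Set.Ioc_disjoint_Ioc_of_le le_rfl) measurableSet_Ioc
            hInt.integrableOn hInt.integrableOn, ih, Finset.sum_range_succ]
    have hIeq : ∫ x, g x ∂μ = ∑ i ∈ Finset.range n, ∫ x in Set.Ioc (t i) (t (i+1)), g x ∂μ := by
      rw [← hsplit n, ht0, htn, ← hres]
      rw [Measure.restrict_restrict measurableSet_Ioc]
      rw [Set.inter_self]
    have hpiece : ∀ i ∈ Finset.range n,
        |(∫ x in Set.Ioc (t i) (t (i+1)), g x ∂μ) - g (t (i+1)) * (FF (i+1) - FF i)|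
          ≤ ε * (FF (i+1) - FF i) := by
      intro i hi
      have hi' := Finset.mem_range.1 hi
      rw [← hm i]
      have heq : (∫ x in Set.Ioc (t i) (t (i+1)), g x ∂μ)
          - g (t (i+1)) * (μ (Set.Ioc (t i) (t (i+1)))).toReal
          = ∫ x in Set.Ioc (t i) (t (i+1)), (g x - g (t (i+1))) ∂μ := by
        rw [integral_sub hInt.integrableOn (integrableOn_const (measure_ne_top _ _)),
          setIntegral_const, smul_eq_mul, mul_comm]; rfl
      rw [heq]
      have hbound : ∀ x ∈ Set.Ioc (t i) (t (i+1)), ‖g x - g (t (i+1))‖ ≤ ε := by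
        intro x hx
        rw [Real.norm_eq_abs]
        have hx1 : t i < x := hx.1
        have hx2 : x ≤ t (i+1) := hx.2
        have hst := ht_succ i
        have hd : |x - t (i+1)| < η := by
          rw [abs_sub_lt_iff]
          constructor <;> linarith
        have hxbig : x ∈ Icc (-b-1) (b+1) := by
          have hl : t 0 ≤ t i := ht_mono (Nat.zero_le i)
          rw [ht0] at hl
          have hr : t (i+1) ≤ t n := ht_mono (by omega)
          rw [htn] at hr
          constructor <;> linarith
        exact hmod x hxbig (t (i+1)) (htbig (i+1) (by omega)) hd
      rw [← Real.norm_eq_abs]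
      exact norm_setIntegral_le_of_norm_le_const (measure_lt_top _ _) hbound
    have hFFsum : ∑ i ∈ Finset.range n, (FF (i+1) - FF i) = L := by
      rw [Finset.sum_range_sub FF n, hFFn, hFF0, sub_zero]
    calc |(∫ x, g x ∂μ) - D'|
        = |∑ i ∈ Finset.range n,
            ((∫ x in Set.Ioc (t i) (t (i+1)), g x ∂μ) - g (t (i+1)) * (FF (i+1) - FF i))| := by
          rw [hIeq, hD'def, Finset.sum_sub_distrib]
      _ ≤ ∑ i ∈ Finset.range n,
            |(∫ x in Set.Ioc (t i) (t (i+1)), g x ∂μ) - g (t (i+1)) * (FF (i+1) - FF i)| :=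
          Finset.abs_sum_le_sum_abs _ _
      _ ≤ ∑ i ∈ Finset.range n, ε * (FF (i+1) - FF i) := Finset.sum_le_sum hpiece
      _ = ε * L := by rw [← Finset.mul_sum, hFFsum]
  -- Claim C : |D - D'| ≤ ε * L
  have claimC : |D - D'| ≤ ε * L := by
    set A : ℕ → ℝ := fun i => S i - FF i with hAdef
    have hA0 : A 0 = 0 := by rw [hAdef]; show S 0 - FF 0 = 0; rw [hS0, hFF0, sub_zero]
    have hAn : A n = 0 := by rw [hAdef]; show S n - FF n = 0; rw [hSn, hFFn, sub_self]
    have hDD' : D - D' = ∑ i ∈ Finset.range n, g (t (i+1)) * (A (i+1) - A i) := by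
      rw [hDdef, hD'def, ← Finset.sum_sub_distrib]
      apply Finset.sum_congr rfl
      intro i _
      show g (t (i+1)) * (S (i+1) - S i) - g (t (i+1)) * (FF (i+1) - FF i)
        = g (t (i+1)) * ((S (i+1) - FF (i+1)) - (S i - FF i))
      ring
    rw [hDD', abel_sum (fun i => g (t (i+1))) A n, hA0, hAn]
    simp only [mul_zero, zero_mul, add_zero, sub_zero]
    set j : ℕ → ℝ := fun k => Ffun Λ (t k + δ) - Ffun Λ (t k - δ) with hjdef
    have hjnn : ∀ k, 0 ≤ j k := fun k =>
      sub_nonneg.2 (Ffun_mono hΛ (by linarith))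
    have hAbound : ∀ k, |A k| ≤ j k := by
      intro k
      have h1 := (hSsand k).1
      have h2 := (hSsand k).2
      have h3 : Ffun Λ (t k - δ) ≤ FF k := Ffun_mono hΛ (by linarith)
      have h4 : FF k ≤ Ffun Λ (t k + δ) := Ffun_mono hΛ (by linarith)
      rw [hAdef, abs_le]
      constructor
      · show -(Ffun Λ (t k + δ) - Ffun Λ (t k - δ)) ≤ S k - FF k
        linarith
      · show S k - FF k ≤ Ffun Λ (t k + δ) - Ffun Λ (t k - δ)
        linarith
    have hcdiff : ∀ i ∈ Finset.range n, |g (t (i+1)) - g (t (i+2))| ≤ ε := by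
      intro i hi
      have hi' := Finset.mem_range.1 hi
      have hst := ht_succ (i+1)
      have hd : |t (i+1) - t (i+2)| < η := by
        rw [abs_sub_lt_iff]
        constructor <;> linarith
      exact hmod _ (htbig (i+1) (by omega)) _ (htbig (i+2) (by omega)) hd
    have hjsum : ∑ i ∈ Finset.range n, j (i+1) ≤ L := by
      have hjm : ∀ k, j k = (μ (Set.Ioc (t k - δ) (t k + δ))).toReal := by
        intro k
        rw [hμdef, StieltjesFunction.measure_Ioc]
        exact (ENNReal.toReal_ofReal (hjnn k)).symm
      have hdisj : (↑(Finset.range n) : Set ℕ).PairwiseDisjoint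
          (fun i => Set.Ioc (t (i+1) - δ) (t (i+1) + δ)) := by
        intro i _ k _ hik
        have key : ∀ p q : ℕ, p < q →
            Disjoint (Set.Ioc (t (p+1) - δ) (t (p+1) + δ))
              (Set.Ioc (t (q+1) - δ) (t (q+1) + δ)) := by
          intro p q hpq
          have h1 : t (p+1) + δ ≤ t (q+1) - δ := by
            have h2 : t (p+2) ≤ t (q+1) := ht_mono (by omega)
            have h3 := ht_succ (p+1)
            linarith
          rw [Set.disjoint_left]
          intro x hx1 hx2
          have := hx1.2
          have := hx2.1
          linarith
        rcases lt_or_gt_of_ne hik with h | h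
        · exact key i k h
        · exact (key k i h).symm
      have hmeas : μ (⋃ i ∈ Finset.range n, Set.Ioc (t (i+1) - δ) (t (i+1) + δ))
          = ∑ i ∈ Finset.range n, μ (Set.Ioc (t (i+1) - δ) (t (i+1) + δ)) :=
        measure_biUnion_finset hdisj fun i _ => measurableSet_Ioc
      have hle : ∑ i ∈ Finset.range n, μ (Set.Ioc (t (i+1) - δ) (t (i+1) + δ))
          ≤ ENNReal.ofReal L := by
        rw [← hmeas]
        refine le_trans (measure_mono (Set.subset_univ _)) ?_
        rw [hμdef, FS_measure_univ hΛ, ← hLdef]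
      have hreal : ∑ i ∈ Finset.range n, j (i+1)
          = (∑ i ∈ Finset.range n, μ (Set.Ioc (t (i+1) - δ) (t (i+1) + δ))).toReal := by
        rw [ENNReal.toReal_sum fun i _ => measure_ne_top _ _]
        apply Finset.sum_congr rfl
        intro i _
        exact hjm (i+1)
      rw [hreal]
      calc (∑ i ∈ Finset.range n, μ (Set.Ioc (t (i+1) - δ) (t (i+1) + δ))).toReal
          ≤ (ENNReal.ofReal L).toReal :=
            ENNReal.toReal_mono ENNReal.ofReal_ne_top hle
        _ = L := ENNReal.toReal_ofReal hL0
    calc |∑ i ∈ Finset.range n, (g (t (i+1)) - g (t (i+2))) * A (i+1)|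
        ≤ ∑ i ∈ Finset.range n, |(g (t (i+1)) - g (t (i+2))) * A (i+1)| :=
          Finset.abs_sum_le_sum_abs _ _
      _ ≤ ∑ i ∈ Finset.range n, ε * j (i+1) := by
          apply Finset.sum_le_sum
          intro i hi
          rw [abs_mul]
          exact mul_le_mul (hcdiff i hi) (hAbound (i+1)) (abs_nonneg _) hε.le
      _ = ε * ∑ i ∈ Finset.range n, j (i+1) := by rw [Finset.mul_sum]
      _ ≤ ε * L := mul_le_mul_of_nonneg_left hjsum hε.le
  -- combine
  calc |(∫ x, g x ∂μ) - Λ g|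
      ≤ |(∫ x, g x ∂μ) - D'| + |D' - D| + |D - Λ g| := by
        have h1 := abs_sub_le (∫ x, g x ∂μ) D' (Λ g)
        have h2 := abs_sub_le D' D (Λ g)
        linarith
    _ ≤ ε * L + ε * L + ε * L := by
        have h1 : |D' - D| = |D - D'| := abs_sub_comm _ _
        have h2 : |D - Λ g| = |Λ g - D| := abs_sub_comm _ _
        rw [h1, h2]
        exact add_le_add (add_le_add claimB claimC) claimA
    _ ≤ ε * (3 * L + 3) := by nlinarith

end KeyIntegral

/-- For a bounded self-adjoint operator `T` on a complex Hilbert space and `f ∈ H`, there is a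
finite positive Borel measure `μ` on ℝ supported in `[-‖T‖, ‖T‖]` with total mass `‖f‖²` whose
`k`-th moment is `⟨T^k f, f⟩` for every natural number `k`. -/
theorem stmt0 {H : Type*} [NormedAddCommGroup H] [InnerProductSpace ℂ H] [CompleteSpace H]
    (T : H →L[ℂ] H) (hT : ∀ f g : H, (inner ℂ (T f) g : ℂ) = inner ℂ f (T g)) (f : H) :
    ∃ μ : Measure ℝ, IsFiniteMeasure μ ∧
      msupport μ ⊆ Set.Icc (-‖T‖) ‖T‖ ∧
      μ Set.univ = ENNReal.ofReal (‖f‖ ^ 2) ∧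
      ∀ k : ℕ, (inner ℂ ((T ^ k) f) f : ℂ) = ((∫ x : ℝ, x ^ k ∂μ : ℝ) : ℂ) := by
  by_cases hH : Nontrivial H
  · haveI := hH
    have hTsa : IsSelfAdjoint T :=
      ContinuousLinearMap.isSelfAdjoint_iff_isSymmetric.2 fun x y => hT x y
    set Λ : (ℝ → ℝ) → ℝ := fun g => RCLike.re (inner ℂ ((cfc g T) f) f : ℂ) with hΛdef
    have hspec : spectrum ℝ T ⊆ Set.Icc (-‖T‖) ‖T‖ := by
      intro x hx
      have := spectrum.norm_le_norm_of_mem hx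
      rw [Real.norm_eq_abs] at this
      exact Set.mem_Icc.2 (abs_le.1 this)
    have hGF : GoodFunctional ‖T‖ Λ := by
      constructor
      · exact norm_nonneg T
      · intro g h hg hh
        rw [hΛdef]
        show RCLike.re (inner ℂ ((cfc (fun x => g x + h x) T) f) f : ℂ) = _
        rw [cfc_add T g h hg.continuousOn hh.continuousOn, ContinuousLinearMap.add_apply,
          inner_add_left, map_add]
      · intro c g hg
        rw [hΛdef]
        show RCLike.re (inner ℂ ((cfc (fun x => c * g x) T) f) f : ℂ) = _
        rw [cfc_const_mul c g T hg.continuousOn, ContinuousLinearMap.smul_apply]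
        have h1 : (c • ((cfc g T) f)) = ((RCLike.ofReal c : ℂ) • ((cfc g T) f)) :=
          RCLike.real_smul_eq_coe_smul c _
        rw [h1, inner_smul_left, RCLike.conj_ofReal]
        simp only [RCLike.mul_re, RCLike.ofReal_re, RCLike.ofReal_im, zero_mul, sub_zero]
      · intro g h hg hh hle
        have hc : cfc g T ≤ cfc h T :=
          cfc_mono (fun x hx => hle x (hspec hx)) hg.continuousOn hh.continuousOn
        have hp := ((ContinuousLinearMap.le_def _ _).1 hc).re_inner_nonneg_left f
        rw [ContinuousLinearMap.sub_apply, inner_sub_left, map_sub] at hp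
        rw [hΛdef]
        dsimp only
        linarith
    have hone : Λ (fun _ => 1) = ‖f‖ ^ 2 := by
      rw [hΛdef]
      show RCLike.re (inner ℂ ((cfc (fun _ : ℝ => (1:ℝ)) T) f) f : ℂ) = _
      rw [cfc_const_one ℝ T, ContinuousLinearMap.one_apply]
      exact inner_self_eq_norm_sq f
    have hpow : ∀ k : ℕ, Λ (fun x : ℝ => x ^ k) = RCLike.re (inner ℂ ((T ^ k) f) f : ℂ) := by
      intro k
      rw [hΛdef]
      show RCLike.re (inner ℂ ((cfc (fun x : ℝ => x ^ k) T) f) f : ℂ) = _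
      rw [cfc_pow_id (R := ℝ) T k]
    have hreal : ∀ k : ℕ, (inner ℂ ((T ^ k) f) f : ℂ)
        = ((RCLike.re (inner ℂ ((T ^ k) f) f : ℂ) : ℝ) : ℂ) := by
      intro k
      have hsa : IsSelfAdjoint (T ^ k) := hTsa.pow k
      have hsym := ContinuousLinearMap.isSelfAdjoint_iff_isSymmetric.1 hsa
      have h2 := hsym.coe_reApplyInnerSelf_apply f
      rw [ContinuousLinearMap.reApplyInnerSelf_apply] at h2
      exact h2.symm
    refine ⟨(FS hGF).measure, FS_isFiniteMeasure hGF, FS_msupport hGF, ?_, ?_⟩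
    · rw [FS_measure_univ hGF, hone]
    · intro k
      have hint := FS_integral_eq hGF (fun x => x ^ k) (continuous_pow k)
      rw [hreal k, ← hpow k]
      norm_cast
      rw [← hint]
  · rw [not_nontrivial_iff_subsingleton] at hH
    refine ⟨0, inferInstance, ?_, ?_, ?_⟩
    · intro x hx
      have := hx Set.univ isOpen_univ (Set.mem_univ x)
      simp at this
    · have hf : f = 0 := Subsingleton.elim f 0
      rw [hf]
      simp
    · intro k
      have hf : f = 0 := Subsingleton.elim f 0
      rw [hf]
      simp
end

section
/- Let H be a real Hilbert space, T : H → H a bounded self-adjoint linear operator, g₁, …, g_d ∈ H, and c ∈ ℝ^d. Suppose μ₁, …, μ_d and μ_c are finite positive Borel measures on ℝ, each with topological support contained in [−‖T‖, ‖T‖], satisfying ∫ λ^k μ_i(dλ) = ⟨T^k g_i, g_i⟩ for all natural numbers k and all i = 1, …, d, and ∫ λ^k μ_c(dλ) = ⟨T^k (∑_{i=1}^d c_i g_i), ∑_{i=1}^d c_i g_i⟩ for all natural numbers k. Then the topological support of μ_c is contained in the union of the topological supports of those μ_i with c_i ≠ 0. -/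
open MeasureTheory Polynomial

lemma msupport_compl_null (μ : Measure ℝ) : μ (msupport μ)ᶜ = 0 := by
  set N := (msupport μ)ᶜ with hN
  have hx : ∀ x : N, ∃ U : Set ℝ, IsOpen U ∧ (x : ℝ) ∈ U ∧ μ U = 0 := by
    rintro ⟨x, hx⟩
    simp only [hN, Set.mem_compl_iff, msupport, Set.mem_setOf_eq, not_forall] at hx
    obtain ⟨U, hU, hxU, hμ⟩ := hx
    exact ⟨U, hU, hxU, le_antisymm (not_lt.1 hμ) bot_le⟩
  choose u hu hxu hμu using hx
  obtain ⟨s, hs, hss⟩ := TopologicalSpace.isOpen_iUnion_countable u hu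
  have hsub : N ⊆ ⋃ x ∈ s, u x := by
    rw [hss]
    intro x hxN
    exact Set.mem_iUnion.2 ⟨⟨x, hxN⟩, hxu _⟩
  refine le_antisymm (le_trans (measure_mono hsub) ?_) bot_le
  exact le_of_eq (measure_biUnion_null_iff hs |>.2 fun x _ => hμu x)

section Op
variable {H : Type*} [NormedAddCommGroup H] [InnerProductSpace ℝ H]

lemma pow_selfadj (T : H →L[ℝ] H) (hT : ∀ f g : H, (inner ℝ (T f) g : ℝ) = inner ℝ f (T g))
    (k : ℕ) (f g : H) : (inner ℝ ((T ^ k) f) g : ℝ) = inner ℝ f ((T ^ k) g) := by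
  induction k generalizing f g with
  | zero => simp
  | succ n ih =>
    have e : ∀ h : H, (T ^ (n + 1)) h = T ((T ^ n) h) := fun h => by
      rw [pow_succ']; rfl
    have e2 : (T ^ n) (T g) = T ((T ^ n) g) := by
      rw [← ContinuousLinearMap.mul_apply, ← ContinuousLinearMap.mul_apply, ← pow_succ,
        ← pow_succ']
    rw [e, e, hT, ih, e2]

lemma aeval_selfadj (T : H →L[ℝ] H) (hT : ∀ f g : H, (inner ℝ (T f) g : ℝ) = inner ℝ f (T g))
    (q : ℝ[X]) (f g : H) :
    (inner ℝ ((aeval T q) f) g : ℝ) = inner ℝ f ((aeval T q) g) := by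
  induction q using Polynomial.induction_on' with
  | add p r hp hr => simp [map_add, ContinuousLinearMap.add_apply, inner_add_left,
      inner_add_right, hp, hr]
  | monomial n a =>
    simp only [aeval_monomial, ContinuousLinearMap.mul_apply,
      Algebra.algebraMap_eq_smul_one]
    simp only [ContinuousLinearMap.smul_apply, ContinuousLinearMap.one_apply,
      real_inner_smul_left, real_inner_smul_right]
    rw [pow_selfadj T hT]

lemma integrable_of_ae_icc {μ : Measure ℝ} [IsFiniteMeasure μ] {M : ℝ}
    (h : ∀ᵐ x ∂μ, x ∈ Set.Icc (-M) M) {f : ℝ → ℝ} (hf : Continuous f) :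
    Integrable f μ := by
  obtain ⟨C, hC⟩ := (isCompact_Icc (a := -M) (b := M)).exists_bound_of_continuousOn
    hf.continuousOn
  refine ⟨hf.aestronglyMeasurable, HasFiniteIntegral.of_bounded (C := C) ?_⟩
  filter_upwards [h] with x hx using hC x hx

lemma moment_poly (T : H →L[ℝ] H) (v : H) {μ : Measure ℝ} [IsFiniteMeasure μ]
    (hae : ∀ᵐ x ∂μ, x ∈ Set.Icc (-‖T‖) ‖T‖)
    (hmom : ∀ k : ℕ, (∫ x, x ^ k ∂μ) = (inner ℝ ((T ^ k) v) v : ℝ)) (q : ℝ[X]) :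
    (∫ x, q.eval x ∂μ) = (inner ℝ ((aeval T q) v) v : ℝ) := by
  have hint : ∀ k : ℕ, Integrable (fun x : ℝ => x ^ k) μ :=
    fun k => integrable_of_ae_icc hae (continuous_pow k)
  calc (∫ x, q.eval x ∂μ)
      = ∫ x, ∑ k ∈ Finset.range (q.natDegree + 1), q.coeff k * x ^ k ∂μ := by
        congr 1; ext x; exact eval_eq_sum_range x
    _ = ∑ k ∈ Finset.range (q.natDegree + 1), q.coeff k * ∫ x, x ^ k ∂μ := by
        rw [integral_finset_sum]
        · exact Finset.sum_congr rfl fun k _ => integral_const_mul _ _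
        · exact fun k _ => (hint k).const_mul _
    _ = ∑ k ∈ Finset.range (q.natDegree + 1), (inner ℝ ((q.coeff k • T ^ k) v) v : ℝ) := by
        refine Finset.sum_congr rfl fun k _ => ?_
        rw [hmom k, ContinuousLinearMap.smul_apply, real_inner_smul_left]
    _ = (inner ℝ ((∑ k ∈ Finset.range (q.natDegree + 1), q.coeff k • T ^ k) v) v : ℝ) := by
        rw [ContinuousLinearMap.sum_apply, sum_inner]
    _ = _ := by rw [q.aeval_eq_sum_range]

end Op

set_option maxHeartbeats 2000000 in
/-- Support containment for the representing measure of a linear combination: the topological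
support of `μ_c` is contained in the union of the topological supports of those `μ i` with
`c i ≠ 0`. -/
theorem stmt4 {H : Type*} [NormedAddCommGroup H] [InnerProductSpace ℝ H] [CompleteSpace H]
    (T : H →L[ℝ] H) (hT : ∀ f g : H, (inner ℝ (T f) g : ℝ) = inner ℝ f (T g))
    (d : ℕ) (g : Fin d → H) (c : Fin d → ℝ)
    (μ : Fin d → Measure ℝ) (μc : Measure ℝ)
    [∀ i, IsFiniteMeasure (μ i)] [IsFiniteMeasure μc]
    (hsupp : ∀ i, msupport (μ i) ⊆ Set.Icc (-‖T‖) ‖T‖)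
    (hsuppc : msupport μc ⊆ Set.Icc (-‖T‖) ‖T‖)
    (hmom : ∀ i, ∀ k : ℕ, (∫ x, x ^ k ∂(μ i)) = (inner ℝ ((T ^ k) (g i)) (g i) : ℝ))
    (hmomc : ∀ k : ℕ,
      (∫ x, x ^ k ∂μc) = (inner ℝ ((T ^ k) (∑ i, c i • g i)) (∑ i, c i • g i) : ℝ)) :
    msupport μc ⊆ ⋃ i ∈ {i : Fin d | c i ≠ 0}, msupport (μ i) := by
  intro x hx
  by_contra hmem
  simp only [Set.mem_iUnion, Set.mem_setOf_eq, not_exists] at hmem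
  set M := ‖T‖ with hMdef
  have hM : 0 ≤ M := norm_nonneg T
  have hU : ∀ i, ∃ U : Set ℝ, IsOpen U ∧ x ∈ U ∧ (c i ≠ 0 → μ i U = 0) := by
    intro i
    by_cases hci : c i = 0
    · exact ⟨Set.univ, isOpen_univ, trivial, fun h => absurd hci h⟩
    · have hxi : x ∉ msupport (μ i) := fun h => hmem i hci h
      simp only [msupport, Set.mem_setOf_eq, not_forall] at hxi
      obtain ⟨U, hUo, hxU, hμU⟩ := hxi
      exact ⟨U, hUo, hxU, fun _ => le_antisymm (not_lt.1 hμU) bot_le⟩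
  choose U hUo hxU hUnull using hU
  have hVo : IsOpen (⋂ i, U i) := isOpen_iInter_of_finite hUo
  obtain ⟨ε, hε, hball⟩ := Metric.isOpen_iff.1 hVo x (Set.mem_iInter.2 hxU)
  have haec : ∀ᵐ y ∂μc, y ∈ Set.Icc (-M) M := by
    have h0 : μc (Set.Icc (-M) M)ᶜ = 0 :=
      measure_mono_null (Set.compl_subset_compl.2 hsuppc) (msupport_compl_null μc)
    exact ae_iff.2 h0
  have haei : ∀ i, ∀ᵐ y ∂(μ i), y ∈ Set.Icc (-M) M := by
    intro i
    have h0 : μ i (Set.Icc (-M) M)ᶜ = 0 :=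
      measure_mono_null (Set.compl_subset_compl.2 (hsupp i)) (msupport_compl_null (μ i))
    exact ae_iff.2 h0
  have hxI := hsuppc hx
  have hx1 : -M ≤ x := hxI.1
  have hx2 : x ≤ M := hxI.2
  set R : ℝ := 2 * M + ε with hRdef
  have hR : 0 < R := by positivity
  set ρ : ℝ := (R ^ 2)⁻¹ with hρdef
  have hρ : 0 < ρ := by positivity
  have hρR : ρ * R ^ 2 = 1 := inv_mul_cancel₀ (by positivity)
  set p : ℝ[X] := 1 - C ρ * (X - C x) ^ 2 with hpdef
  have hep : ∀ y : ℝ, p.eval y = 1 - ρ * (y - x) ^ 2 := by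
    intro y; simp [hpdef]
  set a : ℝ := 1 - ρ * (ε / 2) ^ 2 with hadef
  set θ : ℝ := 1 - ρ * ε ^ 2 with hθdef
  have hmono : ∀ s t : ℝ, s ≤ t → ρ * s ≤ ρ * t := fun s t h =>
    mul_le_mul_of_nonneg_left h hρ.le
  have hcap : ∀ t : ℝ, t ≤ R ^ 2 → ρ * t ≤ 1 := fun t h => by
    have := hmono t (R ^ 2) h; rw [hρR] at this; exact this
  have ha : 0 < a := by
    have h1 : ρ * (ε / 2) ^ 2 < ρ * R ^ 2 :=
      mul_lt_mul_of_pos_left (by nlinarith) hρ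
    rw [hρR] at h1; simp only [hadef]; linarith
  have hθ0 : 0 ≤ θ := by
    have := hcap (ε ^ 2) (by nlinarith)
    simp only [hθdef]; linarith
  have hθa : θ < a := by
    have h1 : ρ * (ε / 2) ^ 2 < ρ * ε ^ 2 :=
      mul_lt_mul_of_pos_left (by nlinarith) hρ
    simp only [hθdef, hadef]; linarith
  have hA : ∀ y ∈ Set.Icc (-M) M, 0 ≤ p.eval y ∧ p.eval y ≤ 1 := by
    intro y hy
    rw [hep]
    have hy1 := hy.1; have hy2 := hy.2
    constructor
    · have hsq : (y - x) ^ 2 ≤ R ^ 2 := by nlinarith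
      have := hcap ((y - x) ^ 2) hsq; linarith
    · nlinarith [sq_nonneg (y - x)]
  have hB : ∀ y ∈ Metric.ball x (ε / 2), a ≤ p.eval y := by
    intro y hy
    rw [Metric.mem_ball, Real.dist_eq] at hy
    rw [hep]
    have hsq : (y - x) ^ 2 ≤ (ε / 2) ^ 2 := by
      nlinarith [sq_abs (y - x), abs_nonneg (y - x)]
    have := hmono _ _ hsq
    simp only [hadef]; linarith
  have hC' : ∀ y, y ∈ Set.Icc (-M) M → y ∉ Metric.ball x ε → p.eval y ≤ θ := by
    intro y hy hy2
    rw [Metric.mem_ball, Real.dist_eq, not_lt] at hy2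
    rw [hep]
    have hsq : ε ^ 2 ≤ (y - x) ^ 2 := by
      nlinarith [sq_abs (y - x), abs_nonneg (y - x)]
    have := hmono _ _ hsq
    simp only [hθdef]; linarith
  set B : Set ℝ := Metric.ball x (ε / 2) with hBdef
  have hμcB : 0 < μc B := hx B Metric.isOpen_ball (Metric.mem_ball_self (by positivity))
  set Cn : ℝ := ∑ i, |c i| * Real.sqrt ((μ i Set.univ).toReal) with hCndef
  have hCn0 : 0 ≤ Cn := Finset.sum_nonneg fun i _ => by positivity
  set h : H := ∑ i, c i • g i with hhdef
  have key : ∀ n : ℕ, (fun y : ℝ => p.eval y ^ (2 * n)) = (fun y => (p ^ (2 * n)).eval y) := by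
    intro n; ext y; simp [eval_pow]
  have main : ∀ n : ℕ, a ^ (2 * n) * (μc B).toReal ≤ θ ^ (2 * n) * Cn ^ 2 := by
    intro n
    have hFc : Continuous fun y : ℝ => p.eval y ^ (2 * n) :=
      (Polynomial.continuous p).pow _
    have hFnn : ∀ y : ℝ, 0 ≤ p.eval y ^ (2 * n) := fun y =>
      (even_two_mul n).pow_nonneg _
    have hintc : Integrable (fun y : ℝ => p.eval y ^ (2 * n)) μc :=
      integrable_of_ae_icc haec hFc
    have hlow : a ^ (2 * n) * (μc B).toReal ≤ ∫ y, p.eval y ^ (2 * n) ∂μc := by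
      have h1 : a ^ (2 * n) * (μc B).toReal ≤ ∫ y in B, p.eval y ^ (2 * n) ∂μc :=
        setIntegral_ge_of_const_le_real measurableSet_ball (measure_ne_top _ _)
          (fun y hy => pow_le_pow_left₀ ha.le (hB y hy) _) hintc.integrableOn
      refine h1.trans (integral_mono_measure Measure.restrict_le_self ?_ hintc)
      exact Filter.Eventually.of_forall hFnn
    have hmc : (∫ y, p.eval y ^ (2 * n) ∂μc) = ‖(aeval T (p ^ n)) h‖ ^ 2 := by
      have hmp := moment_poly T h haec hmomc (p ^ (2 * n))
      rw [key n, hmp]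
      have h2 : p ^ (2 * n) = p ^ n * p ^ n := by ring
      rw [h2, map_mul, ContinuousLinearMap.mul_apply,
        aeval_selfadj T hT (p ^ n), real_inner_self_eq_norm_sq]
    have hmi : ∀ i, (∫ y, p.eval y ^ (2 * n) ∂(μ i)) = ‖(aeval T (p ^ n)) (g i)‖ ^ 2 := by
      intro i
      have hmp := moment_poly T (g i) (haei i) (hmom i) (p ^ (2 * n))
      rw [key n, hmp]
      have h2 : p ^ (2 * n) = p ^ n * p ^ n := by ring
      rw [h2, map_mul, ContinuousLinearMap.mul_apply,
        aeval_selfadj T hT (p ^ n), real_inner_self_eq_norm_sq]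
    have hup : ∀ i, c i ≠ 0 →
        ‖(aeval T (p ^ n)) (g i)‖ ≤ θ ^ n * Real.sqrt ((μ i Set.univ).toReal) := by
      intro i hci
      have haeU : ∀ᵐ y ∂(μ i), y ∉ U i := by
        rw [ae_iff]; simpa using hUnull i hci
      have hb : (∫ y, p.eval y ^ (2 * n) ∂(μ i)) ≤ θ ^ (2 * n) * (μ i Set.univ).toReal := by
        have hle : ∀ᵐ y ∂(μ i), p.eval y ^ (2 * n) ≤ θ ^ (2 * n) := by
          filter_upwards [haei i, haeU] with y hy hyU
          have hnb : y ∉ Metric.ball x ε := fun hyb => hyU (Set.mem_iInter.1 (hball hyb) i)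
          exact pow_le_pow_left₀ (hA y hy).1 (hC' y hy hnb) _
        calc (∫ y, p.eval y ^ (2 * n) ∂(μ i))
            ≤ ∫ _, θ ^ (2 * n) ∂(μ i) :=
              integral_mono_ae (integrable_of_ae_icc (haei i) hFc) (integrable_const _) hle
          _ = θ ^ (2 * n) * (μ i Set.univ).toReal := by
              rw [integral_const, smul_eq_mul, mul_comm, measureReal_def]
      have h3 : ‖(aeval T (p ^ n)) (g i)‖ ^ 2
          ≤ (θ ^ n * Real.sqrt ((μ i Set.univ).toReal)) ^ 2 := by
        rw [← hmi i]
        have h4 : (θ ^ n * Real.sqrt ((μ i Set.univ).toReal)) ^ 2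
            = θ ^ (2 * n) * (μ i Set.univ).toReal := by
          rw [mul_pow, Real.sq_sqrt ENNReal.toReal_nonneg, ← pow_mul, mul_comm n 2]
        rw [h4]; exact hb
      have h5 := Real.sqrt_le_sqrt h3
      rwa [Real.sqrt_sq (norm_nonneg _), Real.sqrt_sq (by positivity)] at h5
    have hnorm : ‖(aeval T (p ^ n)) h‖ ≤ θ ^ n * Cn := by
      have hexp : (aeval T (p ^ n)) h = ∑ i, c i • (aeval T (p ^ n)) (g i) := by
        rw [hhdef, map_sum]
        exact Finset.sum_congr rfl fun i _ => map_smul _ _ _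
      rw [hexp]
      calc ‖∑ i, c i • (aeval T (p ^ n)) (g i)‖
          ≤ ∑ i, ‖c i • (aeval T (p ^ n)) (g i)‖ := norm_sum_le _ _
        _ ≤ ∑ i, |c i| * (θ ^ n * Real.sqrt ((μ i Set.univ).toReal)) := by
            refine Finset.sum_le_sum fun i _ => ?_
            rw [norm_smul, Real.norm_eq_abs]
            by_cases hci : c i = 0
            · simp [hci]
            · exact mul_le_mul_of_nonneg_left (hup i hci) (abs_nonneg _)
        _ = θ ^ n * Cn := by
            rw [hCndef, Finset.mul_sum]
            exact Finset.sum_congr rfl fun i _ => by ring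
    calc a ^ (2 * n) * (μc B).toReal
        ≤ ∫ y, p.eval y ^ (2 * n) ∂μc := hlow
      _ = ‖(aeval T (p ^ n)) h‖ ^ 2 := hmc
      _ ≤ (θ ^ n * Cn) ^ 2 := pow_le_pow_left₀ (norm_nonneg _) hnorm 2
      _ = θ ^ (2 * n) * Cn ^ 2 := by rw [mul_pow, ← pow_mul, mul_comm n 2]
  -- conclude μc B = 0, contradiction
  have hr1 : (θ / a) ^ 2 < 1 := by
    have : θ / a < 1 := (div_lt_one ha).2 hθa
    exact pow_lt_one₀ (div_nonneg hθ0 ha.le) this two_ne_zero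
  have hm : ∀ n : ℕ, (μc B).toReal ≤ Cn ^ 2 * ((θ / a) ^ 2) ^ n := by
    intro n
    have hpa : 0 < a ^ (2 * n) := pow_pos ha _
    have heq : Cn ^ 2 * ((θ / a) ^ 2) ^ n = (θ ^ (2 * n) * Cn ^ 2) / a ^ (2 * n) := by
      rw [show ((θ / a) ^ 2) ^ n = (θ / a) ^ (2 * n) by rw [pow_mul], div_pow,
        mul_comm (θ ^ (2 * n)) (Cn ^ 2), mul_div_assoc]
    rw [heq, le_div_iff₀ hpa]
    calc (μc B).toReal * a ^ (2 * n) = a ^ (2 * n) * (μc B).toReal := by ring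
      _ ≤ θ ^ (2 * n) * Cn ^ 2 := main n
  have htend : Filter.Tendsto (fun n : ℕ => Cn ^ 2 * ((θ / a) ^ 2) ^ n)
      Filter.atTop (nhds 0) := by
    have h0 : Filter.Tendsto (fun n : ℕ => ((θ / a) ^ 2) ^ n) Filter.atTop (nhds 0) :=
      tendsto_pow_atTop_nhds_zero_of_lt_one (by positivity) hr1
    simpa using h0.const_mul (Cn ^ 2)
  have hle0 : (μc B).toReal ≤ 0 := ge_of_tendsto' htend hm
  have hz : μc B = 0 := by
    have hto : (μc B).toReal = 0 := le_antisymm hle0 ENNReal.toReal_nonneg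
    exact ((ENNReal.toReal_eq_zero_iff _).1 hto).resolve_right (measure_ne_top _ _)
  exact absurd hz hμcB.ne'
end

section
/- Let δ ∈ (0, 1) and B > 0. Let F and, for each M ∈ ℕ, μ_M be finite positive Borel measures on ℝ whose topological supports are contained in [−1+δ, 1−δ] and with μ_M(ℝ) ≤ B for all M. Define γ(k) = ∫ α^{|k|} F(dα) and m_M(k) = ∫ α^{|k|} μ_M(dα) for k ∈ ℤ. If ∑_{k ∈ ℤ} ( m_M(k) − γ(k) )² → 0 as M → ∞, then ∑_{k ∈ ℤ} m_M(k) → ∑_{k ∈ ℤ} γ(k) as M → ∞ (all these families being summable over ℤ). -/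
open MeasureTheory Filter

lemma msupport_compl_null_s12 (ν : Measure ℝ) {S : Set ℝ} (hS : IsClosed S)
    (h : msupport ν ⊆ S) : ν Sᶜ = 0 := by
  apply measure_null_of_locally_null
  intro x hx
  have hxs : x ∉ msupport ν := fun hmem => hx (h hmem)
  simp only [msupport, Set.mem_setOf_eq, not_forall] at hxs
  obtain ⟨U, hU, hxU, hμU⟩ := hxs
  refine ⟨U, mem_nhdsWithin_of_mem_nhds (hU.mem_nhds hxU), ?_⟩
  exact le_antisymm (not_lt.mp hμU) zero_le

lemma abs_le_of_ae_mem (ν : Measure ℝ) {r : ℝ} (hr : 0 ≤ r)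
    (h0 : ν (Set.Icc (-r) r)ᶜ = 0) : ∀ᵐ α ∂ν, |α| ≤ r := by
  have : ∀ᵐ α ∂ν, α ∈ Set.Icc (-r) r := by
    rw [MeasureTheory.ae_iff]
    have hset : {a : ℝ | ¬ a ∈ Set.Icc (-r) r} = (Set.Icc (-r) r)ᶜ := rfl
    rw [hset]; exact h0
  filter_upwards [this] with α hα
  exact abs_le.mpr ⟨hα.1, hα.2⟩

lemma moment_abs_le (ν : Measure ℝ) [IsFiniteMeasure ν] {r : ℝ}
    (h : ∀ᵐ α ∂ν, |α| ≤ r) (hr : 0 ≤ r) (n : ℕ) :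
    |∫ α, α ^ n ∂ν| ≤ (ν Set.univ).toReal * r ^ n := by
  have hb : ∀ᵐ α ∂ν, ‖α ^ n‖ ≤ r ^ n := by
    filter_upwards [h] with α hα
    rw [norm_pow, Real.norm_eq_abs]
    exact pow_le_pow_left₀ (abs_nonneg α) hα n
  have := norm_integral_le_of_norm_le_const (μ := ν) hb
  rw [Real.norm_eq_abs] at this
  rw [measureReal_def, mul_comm] at this
  linarith [this]

lemma summable_geom_int {r : ℝ} (h0 : 0 ≤ r) (h1 : r < 1) :
    Summable (fun k : ℤ => r ^ k.natAbs) := by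
  apply Summable.of_nat_of_neg
  · simpa using summable_geometric_of_lt_one h0 h1
  · simpa using summable_geometric_of_lt_one h0 h1

lemma sqrt_pow' {r : ℝ} (hr : 0 ≤ r) (n : ℕ) :
    Real.sqrt (r ^ n) = Real.sqrt r ^ n := by
  induction n with
  | zero => simp
  | succ n ih => rw [pow_succ, pow_succ, Real.sqrt_mul (pow_nonneg hr n), ih]

/-- If the moment sequences `m_M` of finite positive measures `μ_M` supported in `[−1+δ,1−δ]`
with uniformly bounded masses converge in ℓ² to the moment sequence `γ` of `F`, then the sums
converge: `∑_{k∈ℤ} m_M(k) → ∑_{k∈ℤ} γ(k)`. -/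
theorem stmt12 (δ : ℝ) (hδ : δ ∈ Set.Ioo (0 : ℝ) 1) (B : ℝ) (hB : 0 < B)
    (F : Measure ℝ) (μ : ℕ → Measure ℝ)
    [IsFiniteMeasure F] [∀ M, IsFiniteMeasure (μ M)]
    (hFsupp : msupport F ⊆ Set.Icc (-1 + δ) (1 - δ))
    (hμsupp : ∀ M, msupport (μ M) ⊆ Set.Icc (-1 + δ) (1 - δ))
    (hμB : ∀ M, μ M Set.univ ≤ ENNReal.ofReal B)
    (γ : ℤ → ℝ) (hγ : ∀ k : ℤ, γ k = ∫ α, α ^ k.natAbs ∂F)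
    (m : ℕ → ℤ → ℝ) (hm : ∀ M, ∀ k : ℤ, m M k = ∫ α, α ^ k.natAbs ∂(μ M))
    (hl2 : Tendsto (fun M => ∑' k : ℤ, (m M k - γ k) ^ 2) atTop (nhds 0)) :
    Summable γ ∧ (∀ M, Summable (m M)) ∧
    Tendsto (fun M => ∑' k : ℤ, m M k) atTop (nhds (∑' k : ℤ, γ k)) := by
  obtain ⟨hδ0, hδ1⟩ := hδ
  set r : ℝ := 1 - δ with hr_def
  have hr0 : 0 ≤ r := by rw [hr_def]; linarith
  have hr1 : r < 1 := by rw [hr_def]; linarith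
  have hIcc : Set.Icc (-1 + δ) (1 - δ) = Set.Icc (-r) r := by
    congr 1; ring
  -- a.e. bounds
  have hFae : ∀ᵐ α ∂F, |α| ≤ r := by
    apply abs_le_of_ae_mem F hr0
    exact msupport_compl_null_s12 F isClosed_Icc (by rw [← hIcc]; exact hFsupp)
  have hμae : ∀ M, ∀ᵐ α ∂(μ M), |α| ≤ r := by
    intro M
    apply abs_le_of_ae_mem (μ M) hr0
    exact msupport_compl_null_s12 (μ M) isClosed_Icc (by rw [← hIcc]; exact hμsupp M)
  set CF : ℝ := (F Set.univ).toReal with hCF_def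
  have hCF0 : 0 ≤ CF := ENNReal.toReal_nonneg
  have hγb : ∀ k : ℤ, |γ k| ≤ CF * r ^ k.natAbs := by
    intro k; rw [hγ k]; exact moment_abs_le F hFae hr0 k.natAbs
  have hmass : ∀ M, ((μ M) Set.univ).toReal ≤ B :=
    fun M => ENNReal.toReal_le_of_le_ofReal hB.le (hμB M)
  have hmb : ∀ M, ∀ k : ℤ, |m M k| ≤ B * r ^ k.natAbs := by
    intro M k; rw [hm M k]
    refine le_trans (moment_abs_le (μ M) (hμae M) hr0 k.natAbs) ?_
    exact mul_le_mul_of_nonneg_right (hmass M) (pow_nonneg hr0 _)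
  have hgeom : Summable (fun k : ℤ => r ^ k.natAbs) := summable_geom_int hr0 hr1
  -- summability
  have hγs : Summable γ := by
    apply Summable.of_norm_bounded (g := fun k : ℤ => CF * r ^ k.natAbs) (hgeom.mul_left CF)
    intro k; rw [Real.norm_eq_abs]; exact hγb k
  have hms : ∀ M, Summable (m M) := by
    intro M
    apply Summable.of_norm_bounded (g := fun k : ℤ => B * r ^ k.natAbs) (hgeom.mul_left B)
    intro k; rw [Real.norm_eq_abs]; exact hmb M k
  refine ⟨hγs, hms, ?_⟩
  -- the difference sequence
  set C : ℝ := B + CF with hC_def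
  have hC0 : 0 < C := by positivity
  have hab : ∀ M, ∀ k : ℤ, |m M k - γ k| ≤ C * r ^ k.natAbs := by
    intro M k
    calc |m M k - γ k| ≤ |m M k| + |γ k| := abs_sub _ _
    _ ≤ B * r ^ k.natAbs + CF * r ^ k.natAbs := add_le_add (hmb M k) (hγb k)
    _ = C * r ^ k.natAbs := by ring
  have hsq_s : ∀ M, Summable (fun k : ℤ => (m M k - γ k) ^ 2) := by
    intro M
    have hrr : Summable (fun k : ℤ => (C * C) * (r * r) ^ k.natAbs) :=
      (summable_geom_int (mul_nonneg hr0 hr0) (by nlinarith)).mul_left _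
    apply Summable.of_nonneg_of_le (fun k => sq_nonneg _) (fun k => ?_) hrr
    have hb : (m M k - γ k) ^ 2 ≤ (C * r ^ k.natAbs) * (C * r ^ k.natAbs) := by
      rw [sq, ← abs_mul_abs_self]
      exact mul_le_mul (hab M k) (hab M k) (abs_nonneg _) (by positivity)
    refine hb.trans_eq ?_
    rw [mul_pow]; ring
  set e : ℕ → ℝ := fun M => ∑' k : ℤ, (m M k - γ k) ^ 2 with he_def
  have he0 : ∀ M, 0 ≤ e M := fun M => tsum_nonneg (fun k => sq_nonneg _)
  -- pointwise: |a_k| ≤ √C * (√r)^|k| * √(√(e M))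
  set s : ℝ := Real.sqrt r with hs_def
  have hs0 : 0 ≤ s := Real.sqrt_nonneg r
  have hs1 : s < 1 := by
    rw [hs_def]
    calc Real.sqrt r < Real.sqrt 1 := Real.sqrt_lt_sqrt hr0 hr1
    _ = 1 := Real.sqrt_one
  have hkey : ∀ M, ∀ k : ℤ,
      |m M k - γ k| ≤ (Real.sqrt C * s ^ k.natAbs) * Real.sqrt (Real.sqrt (e M)) := by
    intro M k
    have h1 : (m M k - γ k) ^ 2 ≤ e M :=
      Summable.le_tsum (hsq_s M) k (fun j _ => sq_nonneg _)
    have h2 : |m M k - γ k| ≤ Real.sqrt (e M) := by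
      have := Real.sqrt_le_sqrt h1
      rwa [Real.sqrt_sq_eq_abs] at this
    have h3 : |m M k - γ k| = Real.sqrt (|m M k - γ k| * |m M k - γ k|) :=
      (Real.sqrt_mul_self (abs_nonneg _)).symm
    rw [h3]
    have h4 : |m M k - γ k| * |m M k - γ k| ≤ (C * r ^ k.natAbs) * Real.sqrt (e M) :=
      mul_le_mul (hab M k) h2 (abs_nonneg _) (mul_nonneg hC0.le (pow_nonneg hr0 _))
    calc Real.sqrt (|m M k - γ k| * |m M k - γ k|)
        ≤ Real.sqrt ((C * r ^ k.natAbs) * Real.sqrt (e M)) := Real.sqrt_le_sqrt h4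
      _ = (Real.sqrt C * s ^ k.natAbs) * Real.sqrt (Real.sqrt (e M)) := by
          rw [Real.sqrt_mul (by positivity), Real.sqrt_mul hC0.le, sqrt_pow' hr0]
  have hgeoms : Summable (fun k : ℤ => s ^ k.natAbs) := summable_geom_int hs0 hs1
  set K : ℝ := Real.sqrt C * ∑' k : ℤ, s ^ k.natAbs with hK_def
  have habs_s : ∀ M, Summable (fun k : ℤ => |m M k - γ k|) := by
    intro M
    apply Summable.of_norm_bounded (g := fun k : ℤ => C * r ^ k.natAbs) (hgeom.mul_left C)
    intro k; rw [Real.norm_eq_abs, abs_abs]; exact hab M k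
  -- sum bound
  have hsum_bound : ∀ M, |(∑' k : ℤ, m M k) - ∑' k : ℤ, γ k|
      ≤ K * Real.sqrt (Real.sqrt (e M)) := by
    intro M
    rw [← Summable.tsum_sub (hms M) hγs]
    have h5 : |∑' k : ℤ, (m M k - γ k)| ≤ ∑' k : ℤ, |m M k - γ k| := by
      have := norm_tsum_le_tsum_norm (f := fun k : ℤ => m M k - γ k)
        (by simpa [Real.norm_eq_abs] using habs_s M)
      simpa [Real.norm_eq_abs] using this
    refine h5.trans ?_
    have h6 : ∑' k : ℤ, |m M k - γ k|
        ≤ ∑' k : ℤ, (Real.sqrt C * s ^ k.natAbs) * Real.sqrt (Real.sqrt (e M)) := by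
      apply Summable.tsum_le_tsum (fun k => hkey M k) (habs_s M)
      exact ((hgeoms.mul_left (Real.sqrt C)).mul_right _)
    refine h6.trans_eq ?_
    rw [tsum_mul_right, tsum_mul_left, hK_def]
  -- conclude
  have hlim : Tendsto (fun M => K * Real.sqrt (Real.sqrt (e M))) atTop (nhds 0) := by
    have h7 : Tendsto (fun M => Real.sqrt (Real.sqrt (e M))) atTop (nhds 0) := by
      have : Tendsto (fun x : ℝ => Real.sqrt (Real.sqrt x)) (nhds 0) (nhds 0) := by
        have := (Real.continuous_sqrt.comp Real.continuous_sqrt).tendsto 0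
        simpa [Function.comp_def] using this
      exact this.comp hl2
    simpa using h7.const_mul K
  have hdiff : Tendsto (fun M => (∑' k : ℤ, m M k) - ∑' k : ℤ, γ k) atTop (nhds 0) := by
    apply squeeze_zero_norm (fun M => ?_) hlim
    rw [Real.norm_eq_abs]; exact hsum_bound M
  have := hdiff.add_const (∑' k : ℤ, γ k)
  simpa using this
end
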